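/- Let $p : \mathbb{R}^d \to [0,\infty)$ be a measurable probability density, let $\rho > 0$ with $I := \int_{\mathbb{R}^d} p^{1/\rho} \in (0,\infty)$, and define $q := p^{1/\rho}/I$ and the tempered density $\hat q := q^\rho / \int q^\rho$. Then for every measurable function $g : \mathbb{R}^d \to \mathbb{R}^m$ with $\int \|g(x)\| p(x)\, dx < \infty$, we have $\int_{\mathbb{R}^d} g(x)\, \hat q(x)\, dx - \int_{\mathbb{R}^d} g(x)\, p(x)\, dx = 0$; in particular, the maximum-likelihood update direction $\mathbb{E}_{\hat q}[g] - \mathbb{E}_p[g]$ vanishes. -/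

import Mathlib

/-!
Tempering is invariant under positive rescaling and undoes `p ↦ p^{1/ρ}` up to normalisation,
so the tempered density of `q` is `p` itself and the two expectations coincide.
-/

open MeasureTheory Real

noncomputable def tempered {α : Type*} [MeasurableSpace α] (μ : Measure α) (ρ : ℝ) (q : α → ℝ) :
    α → ℝ :=
  fun x => q x ^ ρ / ∫ y, q y ^ ρ ∂μ

section Tempered

variable {α : Type*} [MeasurableSpace α] {μ : Measure α} {ρ : ℝ} {f : α → ℝ}

lemma tempered_div_const (hf : ∀ x, 0 ≤ f x) {c : ℝ} (hc : 0 < c) :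
    tempered μ ρ (fun x => f x / c) = tempered μ ρ f := by
  have hcρ : c ^ ρ ≠ 0 := (rpow_pos_of_pos hc ρ).ne'
  funext x
  simp only [tempered, div_rpow (hf _) hc.le, integral_div]
  rw [div_div_div_cancel_right₀ hcρ]

lemma tempered_rpow_one_div (hf : ∀ x, 0 ≤ f x) (hρ : ρ ≠ 0) :
    tempered μ ρ (fun x => f x ^ (1 / ρ)) = fun x => f x / ∫ y, f y ∂μ := by
  have hpow : ∀ x, (f x ^ (1 / ρ)) ^ ρ = f x := fun x => by
    rw [← rpow_mul (hf x), one_div_mul_cancel hρ, rpow_one]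
  funext x
  simp only [tempered, hpow]

end Tempered

theorem mle_update_vanishes_at_tempered_fixed_point_general
    {d m : ℕ} (p : (Fin d → ℝ) → ℝ) (hnn : ∀ x, 0 ≤ p x)
    (hprob : ∫ x, p x = 1)
    (ρ : ℝ) (hρ : 0 < ρ)
    (hI : 0 < ∫ x, p x ^ (1 / ρ))
    (q : (Fin d → ℝ) → ℝ) (hq : q = fun x => p x ^ (1 / ρ) / ∫ y, p y ^ (1 / ρ))
    (qhat : (Fin d → ℝ) → ℝ) (hqhat : qhat = fun x => q x ^ ρ / ∫ y, q y ^ ρ)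
    (g : (Fin d → ℝ) → (Fin m → ℝ)) :
    (∫ x, qhat x • g x) - (∫ x, p x • g x) = 0 := by
  have hqhat_eq : qhat = p := by
    change qhat = tempered volume ρ q at hqhat
    rw [hqhat, hq, tempered_div_const (fun x => rpow_nonneg (hnn x) _) hI,
      tempered_rpow_one_div hnn hρ.ne', hprob]
    simp only [div_one]
  rw [hqhat_eq, sub_self]

/-- If `q ∝ p^{1/ρ}` and `q̂ = q^ρ / ∫ q^ρ` is its `ρ`-tempered density, then for every
measurable `g` with `∫ ‖g‖ p < ∞`, the maximum-likelihood update direction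
`E_{q̂}[g] - E_p[g]` vanishes. -/
theorem mle_update_vanishes_at_tempered_fixed_point
    {d m : ℕ} (p : (Fin d → ℝ) → ℝ) (hp : Measurable p) (hnn : ∀ x, 0 ≤ p x)
    (hpint : Integrable p) (hprob : ∫ x, p x = 1)
    (ρ : ℝ) (hρ : 0 < ρ)
    (hIint : Integrable (fun x => p x ^ (1 / ρ)))
    (hI : 0 < ∫ x, p x ^ (1 / ρ))
    (q : (Fin d → ℝ) → ℝ) (hq : q = fun x => p x ^ (1 / ρ) / ∫ y, p y ^ (1 / ρ))
    (qhat : (Fin d → ℝ) → ℝ) (hqhat : qhat = fun x => q x ^ ρ / ∫ y, q y ^ ρ)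
    (g : (Fin d → ℝ) → (Fin m → ℝ)) (hg : Measurable g)
    (hgint : Integrable (fun x => ‖g x‖ * p x)) :
    (∫ x, qhat x • g x) - (∫ x, p x • g x) = 0 :=
  mle_update_vanishes_at_tempered_fixed_point_general p hnn hprob ρ hρ hI q hq qhat hqhat g
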